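/- arXiv:quant-ph/0301025 — 2 statements merged into one kernel-verified Lean document; each statement's English description precedes it below -/
import Mathlib

section
/- (Proposition 1) Let X₁ ≠ X₂ be vectors in 𝔽₂ⁿ and let f : 𝔽₂ⁿ → 𝔽₂ satisfy the promise that for every q ∈ 𝔽₂ⁿ, f(q) = q·X₁ or f(q) = q·X₂. Then C_{X₁}(f)² + C_{X₂}(f)² ≥ N²/2, where N = 2ⁿ. (Equivalently, running the Deutsch–Jozsa algorithm with the oracle f outputs X₁ or X₂ with probability at least 1/2.) -/
/-- The inner product of two vectors in `𝔽₂ⁿ`. -/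
def dotp {n : ℕ} (q X : Fin n → ZMod 2) : ZMod 2 := ∑ i, q i * X i

/-- The Deutsch–Jozsa coefficient `C_j(f) = #{q : j·q = f q} − #{q : j·q ≠ f q}`. -/
def coefC {n : ℕ} (f : (Fin n → ZMod 2) → ZMod 2) (j : Fin n → ZMod 2) : ℤ :=
  ((Finset.univ.filter (fun q : Fin n → ZMod 2 => dotp j q = f q)).card : ℤ) -
  ((Finset.univ.filter (fun q : Fin n → ZMod 2 => dotp j q ≠ f q)).card : ℤ)

/-!
Write `C_j(f) = ∑_q (-1)^(j·q + f q)`. By the promise, for each `q` one of the two signs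
`s₁, s₂` belonging to `X₁, X₂` is `+1`, so `s₁ + s₂ = s₁ s₂ + 1`. The product
`s₁ s₂ = (-1)^((X₁ - X₂)·q)` is a nontrivial character of `𝔽₂ⁿ` and sums to zero, hence
`C_{X₁} + C_{X₂} = N`, and `a² + b² ≥ (a + b)² / 2` gives the bound.
-/

open Finset Matrix

def signChar : AddChar (ZMod 2) ℤ := AddChar.zmodChar 2 (by norm_num : (-1 : ℤ) ^ 2 = 1)

lemma signChar_apply_eq_ite (x : ZMod 2) : signChar x = if x = 0 then 1 else -1 := by
  decide +revert

lemma signChar_add_eq_ite (a b : ZMod 2) : signChar (a + b) = if a = b then 1 else -1 := by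
  decide +revert

lemma sum_signChar_dotProduct_eq_zero {ι : Type*} [Fintype ι] [DecidableEq ι]
    {d : ι → ZMod 2} (hd : d ≠ 0) : ∑ q, signChar (d ⬝ᵥ q) = 0 := by
  let ψ := signChar.compAddMonoidHom (AddMonoidHom.mk' (d ⬝ᵥ ·) (dotProduct_add d))
  refine AddChar.sum_eq_zero_of_ne_one (ψ := ψ) fun hψ => ?_
  obtain ⟨i, hi⟩ := Function.ne_iff.mp hd
  exact hi <| by
    simpa [ψ, dotProduct_single, signChar_apply_eq_ite] using DFunLike.congr_fun hψ (Pi.single i 1)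

lemma dotp_eq_dotProduct {n : ℕ} (q X : Fin n → ZMod 2) : dotp q X = q ⬝ᵥ X := rfl

lemma coefC_eq_sum_signChar {n : ℕ} (f : (Fin n → ZMod 2) → ZMod 2) (j : Fin n → ZMod 2) :
    coefC f j = ∑ q, signChar (j ⬝ᵥ q + f q) := by
  simp only [signChar_add_eq_ite, sum_ite, sum_const, nsmul_eq_mul, mul_one, mul_neg, coefC,
    dotp_eq_dotProduct, ne_eq, sub_eq_add_neg]
  -- the two sides differ only in the decidability instances of the filters
  congr

lemma coefC_add_coefC_eq_two_pow {n : ℕ} {X₁ X₂ : Fin n → ZMod 2} (hX : X₁ ≠ X₂)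
    {f : (Fin n → ZMod 2) → ZMod 2} (hf : ∀ q, f q = dotp q X₁ ∨ f q = dotp q X₂) :
    coefC f X₁ + coefC f X₂ = 2 ^ n := by
  set s : (Fin n → ZMod 2) → (Fin n → ZMod 2) → ℤ := fun j q => signChar (j ⬝ᵥ q + f q)
  have hprod (q) : s X₁ q * s X₂ q = signChar ((X₁ - X₂) ⬝ᵥ q) := by
    rw [← AddChar.map_add_eq_mul, sub_dotProduct, CharTwo.sub_eq_add, add_add_add_comm,
      CharTwo.add_self_eq_zero, add_zero]
  have hsum (q) : s X₁ q + s X₂ q = s X₁ q * s X₂ q + 1 := by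
    rcases hf q with h | h <;>
      simp only [s, h, dotp_eq_dotProduct, dotProduct_comm q, CharTwo.add_self_eq_zero,
        AddChar.map_zero_eq_one] <;> ring
  calc coefC f X₁ + coefC f X₂ = ∑ q, (s X₁ q * s X₂ q + 1) := by
        simp only [coefC_eq_sum_signChar, ← sum_add_distrib, hsum, s]
    _ = 2 ^ n := by
        rw [sum_add_distrib, sum_congr rfl fun q _ => hprod q,
          sum_signChar_dotProduct_eq_zero (sub_ne_zero.mpr hX)]
        simp

/-- **Proposition 1.** If `f` satisfies the two-secret promise for distinct `X₁ ≠ X₂`,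
then `C_{X₁}(f)² + C_{X₂}(f)² ≥ N²/2` with `N = 2ⁿ`; i.e. the Deutsch–Jozsa algorithm
outputs `X₁` or `X₂` with probability at least `1/2`. -/
theorem coefC_sq_add_sq_ge {n : ℕ} (X₁ X₂ : Fin n → ZMod 2) (hX : X₁ ≠ X₂)
    (f : (Fin n → ZMod 2) → ZMod 2)
    (hf : ∀ q, f q = dotp q X₁ ∨ f q = dotp q X₂) :
    ((coefC f X₁ : ℚ)) ^ 2 + ((coefC f X₂ : ℚ)) ^ 2 ≥ ((2 ^ n : ℚ)) ^ 2 / 2 := by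
  have hsum : (coefC f X₁ : ℚ) + coefC f X₂ = 2 ^ n := by
    exact_mod_cast coefC_add_coefC_eq_two_pow hX hf
  rw [ge_iff_le, ← hsum, div_le_iff₀ two_pos, mul_comm]
  exact add_sq_le
end

section
/- Let X₁, …, X_k be a linearly independent family in 𝔽₂ⁿ and let f : 𝔽₂ⁿ → 𝔽₂ satisfy the majority promise: for every q ∈ 𝔽₂ⁿ, 2·#{i ∈ {1,…,k} : f(q) = q·Xᵢ} ≥ k. Then Σᵢ₌₁ᵏ C_{Xᵢ}(f) = (k·N / 2^(k-1)) · binom(k−1, ⌈(k−1)/2⌉), where N = 2ⁿ. -/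
open Finset

lemma step_id (m j : ℕ) :
    ((m+1:ℤ) - 2*(j+1)) * ((m+1).choose (j+1)) =
      (m+1) * (m.choose (j+1)) - (m+1) * (m.choose j) := by
  by_cases h : j + 1 ≤ m + 1
  · have h1 : (m+1) * m.choose j = (m+1).choose (j+1) * (j+1) := Nat.add_one_mul_choose_eq m j
    have h2 : (m+1).choose (j+2) * (j+2) = (m+1).choose (j+1) * ((m+1) - (j+1)) :=
      Nat.choose_succ_right_eq (m+1) (j+1)
    have h3 : (m+1) * m.choose (j+1) = (m+1).choose (j+2) * (j+2) := Nat.add_one_mul_choose_eq m (j+1)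
    have h4 := congrArg (Nat.cast (R := ℤ)) (h3.trans h2)
    push_cast at h4
    rw [Nat.cast_sub (by omega : j ≤ m)] at h4
    have h5 : ((m+1:ℤ)) * m.choose j = ((m+1).choose (j+1)) * (j+1) := by exact_mod_cast h1
    linear_combination h5 - h4
  · have hj : m < j := by omega
    have e1 : m.choose (j+1) = 0 := Nat.choose_eq_zero_of_lt (by omega)
    have e2 : m.choose j = 0 := Nat.choose_eq_zero_of_lt hj
    have e3 : (m+1).choose (j+1) = 0 := Nat.choose_eq_zero_of_lt (by omega)
    simp [e1, e2, e3]

lemma key_sum (m : ℕ) :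
    ∑ w ∈ Finset.range (m+2), (((m+1).choose w : ℤ) * |((m+1:ℕ):ℤ) - 2*(w:ℤ)|) =
      2 * ((m+1:ℕ):ℤ) * (m.choose ((m+1)/2)) := by
  set k := m + 1 with hk
  set c := k / 2 with hc
  have hck : c ≤ m := by omega
  have hsplit : ∑ w ∈ range (k+1), ((k.choose w : ℤ) * |((k:ℕ):ℤ) - 2*(w:ℤ)|) =
      (∑ w ∈ range (c+1), (k.choose w : ℤ) * |((k:ℕ):ℤ) - 2*(w:ℤ)|) +
      ∑ w ∈ Ico (c+1) (k+1), (k.choose w : ℤ) * |((k:ℕ):ℤ) - 2*(w:ℤ)| := by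
    rw [range_eq_Ico, ← Finset.sum_Ico_consecutive _ (by omega : 0 ≤ c+1) (by omega : c+1 ≤ k+1),
      ← range_eq_Ico]
  have habs1 : ∀ w ∈ range (c+1), (k.choose w : ℤ) * |((k:ℕ):ℤ) - 2*(w:ℤ)| =
      (((k:ℕ):ℤ) - 2*w) * (k.choose w) := by
    intro w hw
    simp only [mem_range] at hw
    rw [abs_of_nonneg (by push_cast; omega)]; ring
  have habs2 : ∀ w ∈ Ico (c+1) (k+1), (k.choose w : ℤ) * |((k:ℕ):ℤ) - 2*(w:ℤ)| =
      (2*(w:ℤ) - ((k:ℕ):ℤ)) * (k.choose w) := by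
    intro w hw
    simp only [mem_Ico] at hw
    rw [abs_of_nonpos (by push_cast; omega)]; push_cast; ring
  have hS1 : ∑ w ∈ range (c+1), (((k:ℕ):ℤ) - 2*(w:ℤ)) * (k.choose w) = k * (m.choose c) := by
    rw [Finset.sum_range_succ']
    have hcong : ∀ j ∈ range c, (((k:ℕ):ℤ) - 2*((j+1:ℕ):ℤ)) * (k.choose (j+1)) =
        ((k:ℕ):ℤ) * m.choose (j+1) - ((k:ℕ):ℤ) * m.choose j := by
      intro j _
      have := step_id m j
      push_cast [hk] at this ⊢
      linarith
    rw [Finset.sum_congr rfl hcong]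
    have tele := Finset.sum_range_sub (fun j => ((k:ℕ):ℤ) * m.choose j) c
    rw [tele]
    simp
  have hS2 : ∑ w ∈ Ico (c+1) (k+1), (2*(w:ℤ) - ((k:ℕ):ℤ)) * (k.choose w) = k * (m.choose c) := by
    rw [Finset.sum_Ico_eq_sum_range]
    rw [show k + 1 - (c + 1) = k - c from by omega]
    have hcong : ∀ i ∈ range (k - c), (2*((c+1+i:ℕ):ℤ) - ((k:ℕ):ℤ)) * (k.choose (c+1+i)) =
        ((k:ℕ):ℤ) * m.choose (c+i) - ((k:ℕ):ℤ) * m.choose (c+(i+1)) := by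
      intro i _
      have h := step_id m (c+i)
      rw [show c+1+i = c+i+1 from by omega, show c+(i+1) = c+i+1 from by omega]
      push_cast [hk] at h ⊢
      linarith
    rw [Finset.sum_congr rfl hcong]
    have tele := Finset.sum_range_sub' (fun j => ((k:ℕ):ℤ) * m.choose (c+j)) (k - c)
    rw [tele, show c + (k - c) = k from by omega, show m.choose k = 0 from
      Nat.choose_eq_zero_of_lt (by omega)]
    simp
  rw [hsplit, Finset.sum_congr rfl habs1, Finset.sum_congr rfl habs2, hS1, hS2]
  ring

lemma dotp_comm {n : ℕ} (q X : Fin n → ZMod 2) : dotp q X = dotp X q := by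
  unfold dotp; exact Finset.sum_congr rfl fun i _ => mul_comm _ _

lemma dotp_add_left {n : ℕ} (q r X : Fin n → ZMod 2) :
    dotp (q + r) X = dotp q X + dotp r X := by
  unfold dotp
  rw [← Finset.sum_add_distrib]
  exact Finset.sum_congr rfl fun i _ => by simp [add_mul]

lemma coefC_eq_sum {n : ℕ} (f : (Fin n → ZMod 2) → ZMod 2) (j : Fin n → ZMod 2) :
    coefC f j = ∑ q : Fin n → ZMod 2, (if dotp j q = f q then (1:ℤ) else -1) := by
  unfold coefC
  rw [Finset.sum_ite, Finset.sum_const, Finset.sum_const]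
  simp only [Finset.filter_not]
  ring

lemma phi_surj {n k : ℕ} (X : Fin k → (Fin n → ZMod 2)) (hX : LinearIndependent (ZMod 2) X) :
    Function.Surjective (fun q : Fin n → ZMod 2 => (fun i => dotp q (X i))) := by
  classical
  let F := ZMod 2
  let M : Matrix (Fin n) (Fin k) F := Matrix.of fun t i => X i t
  have hinj : Function.Injective M.mulVecLin := by
    have : (⇑M.mulVecLin) = M.mulVec := rfl
    rw [this, Matrix.mulVec_injective_iff]
    exact hX
  have hsurj := LinearMap.dualMap_surjective_of_injective hinj
  intro v
  let g : (Fin k → F) →ₗ[F] F :=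
    { toFun := fun c => ∑ i, c i * v i
      map_add' := by intro a b; simp [add_mul, Finset.sum_add_distrib]
      map_smul' := by intro r a; simp [Finset.mul_sum, mul_assoc]; rw [Finset.mul_sum] }
  obtain ⟨h, hh⟩ := hsurj g
  refine ⟨fun t => h (Pi.single t 1), ?_⟩
  funext i
  have hψ : M.mulVecLin (Pi.single i 1) = X i := by
    ext t
    simp [M, Matrix.mulVecLin_apply, Matrix.mulVec_single_one]
  have h1 : h (X i) = g (Pi.single i 1) := by
    rw [← hh]; simp [LinearMap.dualMap_apply, hψ]
  have h2 : g (Pi.single i 1) = v i := by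
    simp [g, Pi.single_apply]
  have h3 : h (X i) = dotp (fun t => h (Pi.single t 1)) (X i) := by
    have hdec : X i = ∑ t, (X i t) • Pi.single t (1 : F) := by
      funext s
      simp [Pi.single_apply, Finset.sum_ite_eq']
    conv_lhs => rw [hdec]
    rw [map_sum]
    unfold dotp
    refine Finset.sum_congr rfl fun t _ => ?_
    rw [map_smul]
    simp [mul_comm]
  change dotp (fun t => h (Pi.single t 1)) (X i) = v i
  rw [← h3, h1, h2]

/-- If `X₁, …, X_k` are linearly independent in `𝔽₂ⁿ` and `f` agrees with the majority
of the `q·Xᵢ` for every question `q`, then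
`Σᵢ C_{Xᵢ}(f) = (k·N / 2^(k-1)) · binom(k−1, ⌈(k−1)/2⌉)` with `N = 2ⁿ`.
(Note `⌈(k−1)/2⌉ = k/2` with natural-number division.) -/
theorem sum_coefC_majority {n k : ℕ} (X : Fin k → (Fin n → ZMod 2))
    (hX : LinearIndependent (ZMod 2) X)
    (f : (Fin n → ZMod 2) → ZMod 2)
    (hf : ∀ q, k ≤ 2 * (Finset.univ.filter (fun i : Fin k => f q = dotp q (X i))).card) :
    ∑ i, (coefC f (X i) : ℚ) =
      ((k : ℚ) * 2 ^ n / 2 ^ (k - 1)) * (Nat.choose (k - 1) (k / 2) : ℚ) := by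
  classical
  rcases Nat.eq_zero_or_pos k with h0 | hpos
  · subst h0; simp
  set φ : (Fin n → ZMod 2) → (Fin k → ZMod 2) := fun q => fun i => dotp q (X i) with hφ
  set wt : (Fin k → ZMod 2) → ℕ :=
    fun v => (Finset.univ.filter (fun i => v i = 1)).card with hwt
  set K : ℕ := (Finset.univ.filter (fun q => φ q = 0)).card with hK
  have hzmod : ∀ x : ZMod 2, x = 0 ∨ x = 1 := by decide
  have hself : ∀ x : ZMod 2, x + x = 0 := by decide
  have hadd : ∀ a b, φ (a + b) = φ a + φ b := by
    intro a b; funext i; exact dotp_add_left a b (X i)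
  have hsurj : Function.Surjective φ := phi_surj X hX
  -- Step 2: pointwise evaluation of the inner sum
  have step2 : ∀ q, (∑ i, if dotp (X i) q = f q then (1:ℤ) else -1) =
      |(k:ℤ) - 2 * (wt (φ q) : ℤ)| := by
    intro q
    have hfa : k ≤ 2 * (Finset.univ.filter (fun i : Fin k => f q = dotp q (X i))).card := hf q
    have t1 : (∑ i, if dotp (X i) q = f q then (1:ℤ) else -1) =
        2 * ((Finset.univ.filter (fun i : Fin k => f q = dotp q (X i))).card : ℤ) - k := by
      have hterm : ∀ i : Fin k, (if dotp (X i) q = f q then (1:ℤ) else -1) =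
          2 * (if f q = dotp q (X i) then (1:ℤ) else 0) - 1 := by
        intro i
        rw [dotp_comm (X i) q]
        by_cases hc : f q = dotp q (X i)
        · rw [if_pos hc.symm, if_pos hc]; ring
        · rw [if_neg (fun h => hc h.symm), if_neg hc]; ring
      rw [Finset.sum_congr rfl (fun i _ => hterm i), Finset.sum_sub_distrib,
        ← Finset.mul_sum, Finset.sum_boole, Finset.sum_const]
      simp
    rw [t1]
    have hwtq : wt (φ q) = (Finset.univ.filter (fun i : Fin k => dotp q (X i) = 1)).card := rfl
    rcases hzmod (f q) with hfq | hfq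
    · -- f q = 0 : complements
      have hcompl : (Finset.univ.filter (fun i : Fin k => dotp q (X i) = 1)).card +
          (Finset.univ.filter (fun i : Fin k => f q = dotp q (X i))).card = k := by
        have hiff : ∀ i ∈ (Finset.univ : Finset (Fin k)),
            (¬ (dotp q (X i) = 1)) ↔ (f q = dotp q (X i)) := by
          intro i _
          rcases hzmod (dotp q (X i)) with h | h <;> rw [h, hfq] <;> simp
        have hc := Finset.card_filter_add_card_filter_not
          (s := (Finset.univ : Finset (Fin k))) (p := fun i => dotp q (X i) = 1)
        rw [Finset.filter_congr hiff] at hc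
        simpa using hc
      rw [hwtq, abs_of_nonneg (by push_cast; omega)]
      push_cast; omega
    · -- f q = 1 : equal filters
      have haw : (Finset.univ.filter (fun i : Fin k => f q = dotp q (X i))) =
          (Finset.univ.filter (fun i : Fin k => dotp q (X i) = 1)) := by
        refine Finset.filter_congr (fun i _ => ?_)
        rw [hfq]; exact eq_comm
      rw [hwtq, ← haw, abs_of_nonpos (by push_cast; omega)]
      push_cast; omega
  -- fibers of φ all have cardinality K
  have hfib : ∀ v, (Finset.univ.filter (fun q => φ q = v)).card = K := by
    intro v
    obtain ⟨q₀, hq₀⟩ := hsurj v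
    rw [hK]
    apply Finset.card_bij' (fun q _ => q + q₀) (fun q _ => q + q₀)
    · intro q hq
      simp only [Finset.mem_filter, Finset.mem_univ, true_and] at hq ⊢
      rw [hadd, hq, hq₀]
      funext i; exact hself (v i)
    · intro q hq
      simp only [Finset.mem_filter, Finset.mem_univ, true_and] at hq ⊢
      rw [hadd, hq, hq₀, zero_add]
    · intro q hq
      rw [add_assoc]
      have : q₀ + q₀ = 0 := funext fun t => hself (q₀ t)
      rw [this, add_zero]
    · intro q hq
      rw [add_assoc]
      have : q₀ + q₀ = 0 := funext fun t => hself (q₀ t)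
      rw [this, add_zero]
  -- counting by weight
  have hcard : ∀ w, (Finset.univ.filter (fun v : Fin k → ZMod 2 => wt v = w)).card
      = k.choose w := by
    intro w
    have := Finset.card_powersetCard w (Finset.univ : Finset (Fin k))
    rw [Finset.card_univ, Fintype.card_fin] at this
    rw [← this]
    apply (Finset.card_nbij (fun s => fun i => if i ∈ s then (1:ZMod 2) else 0) ?_ ?_ ?_).symm
    · intro s hs
      simp only [Finset.mem_coe, Finset.mem_powersetCard_univ] at hs
      simp only [Finset.mem_coe, Finset.mem_filter, Finset.mem_univ, true_and, hwt]
      rw [← hs]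
      congr 1
      ext i
      simp only [Finset.mem_filter, Finset.mem_univ, true_and]
      split_ifs with h
      · exact ⟨fun _ => h, fun _ => rfl⟩
      · exact ⟨fun h01 => absurd h01 (by decide), fun hi => absurd hi h⟩
    · intro s₁ h₁ s₂ h₂ h
      ext i
      have hfi := congrFun h i
      simp only at hfi
      by_cases g1 : i ∈ s₁ <;> by_cases g2 : i ∈ s₂
      · simp [g1, g2]
      · rw [if_pos g1, if_neg g2] at hfi; exact absurd hfi (by decide)
      · rw [if_neg g1, if_pos g2] at hfi; exact absurd hfi (by decide)
      · simp [g1, g2]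
    · intro v hv
      simp only [Finset.mem_coe, Finset.mem_filter, Finset.mem_univ, true_and] at hv
      refine ⟨Finset.univ.filter (fun i => v i = 1), ?_, ?_⟩
      · simp only [Finset.mem_coe, Finset.mem_powersetCard_univ]
        rw [← hv, hwt]
      · funext i
        simp only [Finset.mem_filter, Finset.mem_univ, true_and]
        rcases hzmod (v i) with h | h <;> simp [h]
  -- total count
  have hKtot : 2 ^ k * K = 2 ^ n := by
    have hcu : (Finset.univ : Finset (Fin n → ZMod 2)).card = 2 ^ n := by
      simp [Finset.card_univ]
    have := Finset.card_eq_sum_card_fiberwise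
      (f := φ) (s := (Finset.univ : Finset (Fin n → ZMod 2)))
      (t := (Finset.univ : Finset (Fin k → ZMod 2))) (fun q _ => Finset.mem_univ _)
    rw [hcu, Finset.sum_congr rfl (fun v _ => hfib v), Finset.sum_const,
      Finset.card_univ] at this
    have hck : Fintype.card (Fin k → ZMod 2) = 2 ^ k := by simp
    rw [this, hck, smul_eq_mul]
  -- the integer-valued total sum
  have hzsum : (∑ i, coefC f (X i)) =
      (K : ℤ) * ∑ w ∈ Finset.range (k+1), ((k.choose w : ℤ) * |(k:ℤ) - 2*(w:ℤ)|) := by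
    have e1 : (∑ i, coefC f (X i)) = ∑ q : Fin n → ZMod 2, |(k:ℤ) - 2 * (wt (φ q) : ℤ)| := by
      rw [Finset.sum_congr rfl (fun i _ => coefC_eq_sum f (X i)), Finset.sum_comm]
      exact Finset.sum_congr rfl (fun q _ => step2 q)
    have e2 : ∑ q : Fin n → ZMod 2, |(k:ℤ) - 2 * (wt (φ q) : ℤ)| =
        ∑ v : Fin k → ZMod 2, (K : ℤ) * |(k:ℤ) - 2 * (wt v : ℤ)| := by
      rw [← Finset.sum_fiberwise' Finset.univ φ (fun v => |(k:ℤ) - 2 * (wt v : ℤ)|)]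
      refine Finset.sum_congr rfl (fun v _ => ?_)
      rw [Finset.sum_const, hfib v, nsmul_eq_mul]
    have e3 : ∑ v : Fin k → ZMod 2, |(k:ℤ) - 2 * (wt v : ℤ)| =
        ∑ w ∈ Finset.range (k+1), ((k.choose w : ℤ) * |(k:ℤ) - 2*(w:ℤ)|) := by
      have hmap : ∀ v : Fin k → ZMod 2, v ∈ (Finset.univ : Finset (Fin k → ZMod 2)) →
          wt v ∈ Finset.range (k+1) := by
        intro v _
        simp only [Finset.mem_range, hwt]
        have := Finset.card_filter_le (Finset.univ : Finset (Fin k)) (fun i => v i = 1)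
        simp only [Finset.card_univ, Fintype.card_fin] at this
        omega
      rw [← Finset.sum_fiberwise_of_maps_to' hmap (fun w => |(k:ℤ) - 2*(w:ℤ)|)]
      refine Finset.sum_congr rfl (fun w _ => ?_)
      rw [Finset.sum_const, hcard w, nsmul_eq_mul]
    rw [e1, e2, ← Finset.mul_sum, e3]
  -- the binomial identity
  obtain ⟨m, rfl⟩ : ∃ m, k = m + 1 := ⟨k - 1, by omega⟩
  have hkey : ∑ w ∈ Finset.range (m+1+1), (((m+1).choose w : ℤ) * |((m+1:ℕ):ℤ) - 2*(w:ℤ)|)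
      = 2 * ((m+1:ℕ):ℤ) * (m.choose ((m+1)/2)) := key_sum m
  rw [hkey] at hzsum
  -- cast to ℚ and conclude
  have hcast : ∑ i, (coefC f (X i) : ℚ) = ((∑ i, coefC f (X i) : ℤ) : ℚ) := by push_cast; rfl
  rw [hcast, hzsum]
  have h2n : ((2:ℚ))^n = 2^(m+1) * (K:ℚ) := by exact_mod_cast hKtot.symm
  rw [show m + 1 - 1 = m from rfl]
  have hpow : ((2:ℚ))^m ≠ 0 := by positivity
  field_simp
  rw [h2n]
  push_cast
  ring
end
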